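/- Let r be a real number with r ≠ 0 and cos r ≠ 0. Then the sequence ⟨R_n(r)⟩_{n ≥ 0} has infinitely many nonzero terms; that is, for every natural number N there exists n ≥ N with R_n(r) ≠ 0. -/

import Mathlib

/-!
With `w n r x = (r² - x²)ⁿ / (2ⁿ n!)` one has `∂ₓ w (n + 1) r x = -x · w n r x`, so two
integrations by parts give the three-term recurrence
`R (n + 2) r = (2n + 3) R (n + 1) r - r² R n r`. As `r ≠ 0`, it can be run backwards: two
consecutive zeros `R N r = R (N + 1) r = 0` force `R 0 r = R 1 r = 0`, contradicting
`R 0 r - R 1 r = r cos r ≠ 0`.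
-/

open MeasureTheory intervalIntegral

/-- Hermite's integral `R_n(r) = ∫_0^r ((r² - x²)ⁿ / (2ⁿ n!)) cos x dx`. -/
noncomputable def R (n : ℕ) (r : ℝ) : ℝ :=
  ∫ x in (0:ℝ)..r, ((r ^ 2 - x ^ 2) ^ n / (2 ^ n * n.factorial)) * Real.cos x

open Real

theorem eq_zero_and_succ_eq_zero_of_le_of_recurrence {α : Type*} [Ring α]
    [NoZeroDivisors α] {u a b : ℕ → α} (hb : ∀ n, b n ≠ 0)
    (hrec : ∀ n, u (n + 2) = a n * u (n + 1) + b n * u n)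
    {N : ℕ} (hN : u N = 0 ∧ u (N + 1) = 0) {m : ℕ} (hm : m ≤ N) :
    u m = 0 ∧ u (m + 1) = 0 := by
  induction hm using Nat.decreasingInduction with
  | self => exact hN
  | of_succ m _ ih =>
    obtain ⟨h1, h2⟩ := ih
    have : b m * u m = 0 := by simpa [h1, h2] using (hrec m).symm
    exact ⟨(mul_eq_zero.mp this).resolve_left (hb m), h1⟩

noncomputable def hermiteWeight (n : ℕ) (r x : ℝ) : ℝ :=
  (r ^ 2 - x ^ 2) ^ n / (2 ^ n * n.factorial)

theorem R_eq_integral_hermiteWeight (n : ℕ) (r : ℝ) :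
    R n r = ∫ x in (0:ℝ)..r, hermiteWeight n r x * cos x :=
  rfl

@[fun_prop]
theorem continuous_hermiteWeight (n : ℕ) (r : ℝ) : Continuous (hermiteWeight n r) := by
  unfold hermiteWeight
  fun_prop

@[simp]
theorem hermiteWeight_zero (r x : ℝ) : hermiteWeight 0 r x = 1 := by
  simp [hermiteWeight]

theorem hermiteWeight_succ_self (n : ℕ) (r : ℝ) : hermiteWeight (n + 1) r r = 0 := by
  simp [hermiteWeight]

theorem two_mul_succ_mul_hermiteWeight_succ (n : ℕ) (r x : ℝ) :
    2 * (n + 1) * hermiteWeight (n + 1) r x = (r ^ 2 - x ^ 2) * hermiteWeight n r x := by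
  simp only [hermiteWeight, Nat.factorial_succ]
  push_cast
  field_simp
  ring

theorem hasDerivAt_hermiteWeight_succ (n : ℕ) (r x : ℝ) :
    HasDerivAt (hermiteWeight (n + 1) r) (-(x * hermiteWeight n r x)) x := by
  refine ((((hasDerivAt_pow 2 x).const_sub (r ^ 2)).fun_pow (n + 1)).div_const
    (2 ^ (n + 1) * ((n + 1).factorial : ℝ))).congr_deriv ?_
  simp only [hermiteWeight, Nat.factorial_succ]
  push_cast
  field_simp
  ring

theorem R_succ_eq_integral_mul_sin (n : ℕ) (r : ℝ) :
    R (n + 1) r = ∫ x in (0:ℝ)..r, x * hermiteWeight n r x * sin x := by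
  rw [R_eq_integral_hermiteWeight, intervalIntegral.integral_mul_deriv_eq_deriv_mul
    (fun x _ => hasDerivAt_hermiteWeight_succ n r x) (fun x _ => hasDerivAt_sin x)
    ((by fun_prop : Continuous _).intervalIntegrable _ _) (continuous_cos.intervalIntegrable _ _)]
  simp [hermiteWeight_succ_self, ← intervalIntegral.integral_neg, mul_assoc]

theorem R_add_two (n : ℕ) (r : ℝ) :
    R (n + 2) r = (2 * n + 3) * R (n + 1) r - r ^ 2 * R n r := by
  have hcos : ∀ x ∈ Set.uIcc 0 r, HasDerivAt (fun x => -cos x) (sin x) x :=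
    fun x _ => by simpa only [neg_neg] using (hasDerivAt_cos x).fun_neg
  have hu : ∀ x ∈ Set.uIcc 0 r, HasDerivAt (fun x => x * hermiteWeight (n + 1) r x)
      (hermiteWeight (n + 1) r x - x * (x * hermiteWeight n r x)) x := fun x _ => by
    simpa [sub_eq_add_neg] using (hasDerivAt_id x).fun_mul (hasDerivAt_hermiteWeight_succ n r x)
  rw [R_succ_eq_integral_mul_sin, intervalIntegral.integral_mul_deriv_eq_deriv_mul hu hcos
    ((by fun_prop : Continuous _).intervalIntegrable _ _) (continuous_sin.intervalIntegrable _ _)]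
  have hintegrand (x : ℝ) :
      (hermiteWeight (n + 1) r x - x * (x * hermiteWeight n r x)) * -cos x =
        -((2 * n + 3) * (hermiteWeight (n + 1) r x * cos x)
          - r ^ 2 * (hermiteWeight n r x * cos x)) := by
    linear_combination cos x * two_mul_succ_mul_hermiteWeight_succ n r x
  have hint (k : ℕ) (c : ℝ) :
      IntervalIntegrable (fun x => c * (hermiteWeight k r x * cos x)) volume 0 r :=
    (by fun_prop : Continuous _).intervalIntegrable _ _
  simp only [hermiteWeight_succ_self, hintegrand, intervalIntegral.integral_neg]
  rw [intervalIntegral.integral_sub (hint _ _) (hint _ _), intervalIntegral.integral_const_mul,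
    intervalIntegral.integral_const_mul, R_eq_integral_hermiteWeight, R_eq_integral_hermiteWeight]
  ring

theorem R_zero (r : ℝ) : R 0 r = sin r := by
  simp [R]

theorem R_one (r : ℝ) : R 1 r = sin r - r * cos r := by
  simp only [R_succ_eq_integral_mul_sin, hermiteWeight_zero, mul_one]
  rw [intervalIntegral.integral_mul_deriv_eq_deriv_mul (fun x _ => hasDerivAt_id' x)
    (fun x _ => by simpa only [neg_neg] using (hasDerivAt_cos x).fun_neg)
    (continuous_const.intervalIntegrable _ _) (continuous_sin.intervalIntegrable _ _)]
  simp only [one_mul, intervalIntegral.integral_neg, integral_cos, cos_zero, sin_zero]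
  ring

theorem R_infinitely_many_nonzero (r : ℝ) (hr : r ≠ 0) (hc : Real.cos r ≠ 0) :
    ∀ N : ℕ, ∃ n : ℕ, N ≤ n ∧ R n r ≠ 0 := by
  intro N
  by_contra! h
  have hrec (n : ℕ) : R (n + 2) r = (2 * n + 3) * R (n + 1) r + -r ^ 2 * R n r := by
    rw [R_add_two]
    ring
  obtain ⟨h0, h1⟩ := eq_zero_and_succ_eq_zero_of_le_of_recurrence (u := (R · r))
    (fun _ => neg_ne_zero.mpr (pow_ne_zero 2 hr)) hrec ⟨h N le_rfl, h (N + 1) N.le_succ⟩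
    N.zero_le
  rw [R_zero] at h0
  rw [R_one, h0] at h1
  exact mul_ne_zero hr hc (by linarith)
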